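/- Let X ~ Gamma(α₁, λ) and Y ~ Gamma(α₂, λ) be independent with common rate, and let p > max{−1, −1−α₁, −1−α₂}. Then ∫_{1/2}^1 y^p [1 − P(1−y < X/(X+Y) < y)] dy = (1/(p+1)) · { (B(α₁+p+1, α₂)/B(α₁,α₂))·[1 − I_{1/2}(α₁+p+1, α₂)] + (B(α₁, α₂+p+1)/B(α₁,α₂))·I_{1/2}(α₁, α₂+p+1) − (1/2)^{p+1} }. -/

import Mathlib

open MeasureTheory Real Set ProbabilityTheory

/-- The (complete) beta function `B(a,b) = Γ(a)Γ(b)/Γ(a+b)`. -/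
noncomputable def betaFn (a b : ℝ) : ℝ := Real.Gamma a * Real.Gamma b / Real.Gamma (a + b)

/-- The regularized incomplete beta function `I_x(a,b) = (∫₀^x t^(a-1)(1-t)^(b-1) dt)/B(a,b)`. -/
noncomputable def regIncBeta (x a b : ℝ) : ℝ :=
  (∫ t in (0:ℝ)..x, t ^ (a - 1) * (1 - t) ^ (b - 1)) / betaFn a b

/-!
`V = X / (X + Y)` has the law `Beta(α₁, α₂)`: for fixed `Y = t` substitute `X = t v / (1 - v)`, so
that `V = v`; integrating the joint density over `t` is then a gamma integral of rate `λ / (1 - v)`,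
which leaves the beta density in `v`.

With `M = max V (1 - V)`, the complement of `{1 - y < V < y}` is `{y ≤ M}`, so by Fubini the
left-hand side is `E[∫_{1/2}^M y^p dy] = (E[M^(p+1)] - (1/2)^(p+1)) / (p + 1)`. Splitting the beta
integral for `E[M^(p+1)]` at `1/2` (where `M = 1 - v`, resp. `M = v`) gives the two incomplete beta
terms.
-/

open scoped ENNReal

lemma betaFn_eq_beta (a b : ℝ) : betaFn a b = beta a b := rfl

lemma betaFn_pos {a b : ℝ} (ha : 0 < a) (hb : 0 < b) : 0 < betaFn a b :=
  beta_pos ha hb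

lemma ofReal_beta_integrand {a b x : ℝ} (hx : x ∈ Icc (0 : ℝ) 1) :
    ((x ^ (a - 1) * (1 - x) ^ (b - 1) : ℝ) : ℂ) =
      (x : ℂ) ^ (a - 1 : ℂ) * (1 - x : ℂ) ^ (b - 1 : ℂ) := by
  push_cast [Complex.ofReal_cpow hx.1, Complex.ofReal_cpow (sub_nonneg.2 hx.2)]
  rfl

lemma intervalIntegrable_beta_integrand {a b : ℝ} (ha : 0 < a) (hb : 0 < b) :
    IntervalIntegrable (fun x : ℝ => x ^ (a - 1) * (1 - x) ^ (b - 1)) volume 0 1 := by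
  have hC := (Complex.betaIntegral_convergent (u := a) (v := b) (by simpa) (by simpa)).def'
  rw [uIoc_of_le zero_le_one] at hC
  refine (intervalIntegrable_iff_integrableOn_Ioc_of_le zero_le_one).2
    (IntegrableOn.congr_fun (Integrable.re hC) (fun x hx => ?_) measurableSet_Ioc)
  rw [← ofReal_beta_integrand (Ioc_subset_Icc_self hx), RCLike.re_to_complex, Complex.ofReal_re]

lemma integral_beta_integrand {a b : ℝ} (ha : 0 < a) (hb : 0 < b) :
    ∫ x in (0 : ℝ)..1, x ^ (a - 1) * (1 - x) ^ (b - 1) = betaFn a b := by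
  apply Complex.ofReal_injective
  rw [betaFn, Complex.ofReal_div, Complex.ofReal_mul, ← Complex.Gamma_ofReal,
    ← Complex.Gamma_ofReal, ← Complex.Gamma_ofReal, Complex.ofReal_add,
    ← Complex.betaIntegral_eq_Gamma_mul_div _ _ (by simpa) (by simpa),
    ← intervalIntegral.integral_ofReal, Complex.betaIntegral]
  exact intervalIntegral.integral_congr fun x hx =>
    ofReal_beta_integrand (by rwa [uIcc_of_le zero_le_one] at hx)

lemma betaFn_mul_regIncBeta {a b : ℝ} (ha : 0 < a) (hb : 0 < b) (x : ℝ) :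
    betaFn a b * regIncBeta x a b = ∫ t in (0 : ℝ)..x, t ^ (a - 1) * (1 - t) ^ (b - 1) :=
  mul_div_cancel₀ _ (betaFn_pos ha hb).ne'

lemma integral_beta_integrand_to_one {a b x : ℝ} (ha : 0 < a) (hb : 0 < b)
    (hx : x ∈ Icc (0 : ℝ) 1) :
    ∫ t in x..1, t ^ (a - 1) * (1 - t) ^ (b - 1) = betaFn a b * (1 - regIncBeta x a b) := by
  have hI := intervalIntegrable_beta_integrand ha hb
  rw [mul_one_sub, betaFn_mul_regIncBeta ha hb, ← integral_beta_integrand ha hb,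
    intervalIntegral.integral_interval_sub_left hI
      (hI.mono_set (uIcc_subset_uIcc_left (by rwa [uIcc_of_le zero_le_one])))]

lemma lintegral_withDensity_of_support_subset {α : Type*} [MeasurableSpace α] {μ : Measure α}
    {f g : α → ℝ≥0∞} (hf : Measurable f) (hg : Measurable g) {s : Set α}
    (hs : Function.support f ⊆ s) :
    ∫⁻ x, g x ∂μ.withDensity f = ∫⁻ x in s, f x * g x ∂μ := by
  rw [lintegral_withDensity_eq_lintegral_mul _ hf hg,
    setLIntegral_eq_of_support_subset ((Function.support_mul_subset_left _ _).trans hs)]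
  rfl

@[fun_prop]
lemma measurable_gammaPDF (a r : ℝ) : Measurable (gammaPDF a r) :=
  (measurable_gammaPDFReal a r).ennreal_ofReal

lemma lintegral_gammaMeasure {a r : ℝ} {g : ℝ → ℝ≥0∞} (hg : Measurable g) :
    ∫⁻ x, g x ∂gammaMeasure a r = ∫⁻ x in Ioi 0, gammaPDF a r x * g x := by
  rw [gammaMeasure, lintegral_withDensity_of_support_subset (measurable_gammaPDF a r) hg
      (s := Ici 0) (fun x hx => not_lt.1 fun h => hx (gammaPDF_of_neg h)),
    setLIntegral_congr Ioi_ae_eq_Ici]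

@[fun_prop]
lemma measurable_betaPDF (a b : ℝ) : Measurable (betaPDF a b) :=
  (measurable_betaPDFReal a b).ennreal_ofReal

lemma lintegral_betaMeasure {a b : ℝ} {g : ℝ → ℝ≥0∞} (hg : Measurable g) :
    ∫⁻ v, g v ∂betaMeasure a b = ∫⁻ v in Ioo 0 1, betaPDF a b v * g v :=
  lintegral_withDensity_of_support_subset (measurable_betaPDF a b) hg
    fun _ hv => ⟨not_le.1 fun h => hv (betaPDF_eq_zero_of_nonpos h),
      not_le.1 fun h => hv (betaPDF_eq_zero_of_one_le h)⟩

lemma ae_mem_Ioo_betaMeasure (a b : ℝ) : ∀ᵐ v ∂betaMeasure a b, v ∈ Ioo (0 : ℝ) 1 := by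
  refine (ae_withDensity_iff (measurable_betaPDF a b)).2 (ae_of_all _ fun v hv => ?_)
  by_contra hv'
  rcases not_and_or.1 hv' with h | h
  · exact hv (betaPDF_eq_zero_of_nonpos (not_lt.1 h))
  · exact hv (betaPDF_eq_zero_of_one_le (not_lt.1 h))

lemma betaPDFReal_nonneg {a b : ℝ} (ha : 0 < a) (hb : 0 < b) (v : ℝ) : 0 ≤ betaPDFReal a b v := by
  by_cases hv : 0 < v ∧ v < 1
  · exact (betaPDFReal_pos hv.1 hv.2 ha hb).le
  · simp [betaPDFReal, hv]

lemma integral_betaMeasure {a b : ℝ} (ha : 0 < a) (hb : 0 < b) (g : ℝ → ℝ) :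
    ∫ v, g v ∂betaMeasure a b =
      (∫ v in (0 : ℝ)..1, g v * (v ^ (a - 1) * (1 - v) ^ (b - 1))) / betaFn a b := by
  rw [betaMeasure, integral_withDensity_eq_integral_toReal_smul (measurable_betaPDF a b)
    (ae_of_all _ fun _ => ENNReal.ofReal_lt_top),
    ← setIntegral_eq_integral_of_forall_compl_eq_zero (s := Ioo 0 1) (fun v hv => by
      simp [betaPDF, betaPDFReal, show ¬(0 < v ∧ v < 1) from hv]),
    intervalIntegral.integral_of_le zero_le_one, integral_Ioc_eq_integral_Ioo, ← integral_div]
  refine setIntegral_congr_fun measurableSet_Ioo fun v hv => ?_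
  rw [betaPDF, ENNReal.toReal_ofReal (betaPDFReal_nonneg ha hb v), betaPDFReal,
    if_pos (show 0 < v ∧ v < 1 from hv), smul_eq_mul, betaFn_eq_beta]
  ring

lemma ae_max_one_sub_mem_Icc_betaMeasure (a b : ℝ) :
    ∀ᵐ v ∂betaMeasure a b, max v (1 - v) ∈ Icc (1 / 2) 1 := by
  filter_upwards [ae_mem_Ioo_betaMeasure a b] with v hv
  exact ⟨by rw [le_max_iff]; by_contra! h; linarith [h.1, h.2],
    max_le hv.2.le (by linarith [hv.1])⟩

lemma integrable_max_one_sub_rpow_betaMeasure {a b s : ℝ} (ha : 0 < a) (hb : 0 < b)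
    (hs : 0 ≤ s) : Integrable (fun v => max v (1 - v) ^ s) (betaMeasure a b) := by
  have := isProbabilityMeasureBeta ha hb
  have hmeas : Measurable fun v : ℝ => max v (1 - v) ^ s := by fun_prop
  refine Integrable.of_bound hmeas.aestronglyMeasurable 1 ?_
  filter_upwards [ae_max_one_sub_mem_Icc_betaMeasure a b] with v hv
  have hM0 : 0 ≤ max v (1 - v) := by linarith [hv.1]
  rw [norm_of_nonneg (rpow_nonneg hM0 _)]
  exact rpow_le_one hM0 hv.2 hs

lemma integral_max_one_sub_rpow_betaMeasure {a b s : ℝ} (ha : 0 < a) (hb : 0 < b)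
    (has : 0 < a + s) (hbs : 0 < b + s) :
    ∫ v, max v (1 - v) ^ s ∂betaMeasure a b =
      betaFn (a + s) b / betaFn a b * (1 - regIncBeta (1 / 2) (a + s) b) +
        betaFn a (b + s) / betaFn a b * regIncBeta (1 / 2) a (b + s) := by
  have hleft : EqOn (fun v : ℝ => v ^ (a - 1) * (1 - v) ^ (b + s - 1))
      (fun v => max v (1 - v) ^ s * (v ^ (a - 1) * (1 - v) ^ (b - 1))) (uIcc 0 (1 / 2)) := by
    intro v hv
    rw [uIcc_of_le (by norm_num)] at hv
    have hv' : 0 < 1 - v := by linarith [hv.2]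
    dsimp only
    rw [max_eq_right (by linarith [hv.2]), mul_left_comm, ← rpow_add hv']
    ring_nf
  have hright : EqOn (fun v : ℝ => v ^ (a + s - 1) * (1 - v) ^ (b - 1))
      (fun v => max v (1 - v) ^ s * (v ^ (a - 1) * (1 - v) ^ (b - 1))) (uIcc (1 / 2) 1) := by
    intro v hv
    rw [uIcc_of_le (by norm_num)] at hv
    have hv' : 0 < v := by linarith [hv.1]
    dsimp only
    rw [max_eq_left (by linarith [hv.1]), ← mul_assoc, ← rpow_add hv']
    ring_nf
  have hhalf : (1 / 2 : ℝ) ∈ Icc 0 1 := by norm_num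
  rw [integral_betaMeasure ha hb, ← intervalIntegral.integral_add_adjacent_intervals
      ((intervalIntegrable_congr (hleft.mono uIoc_subset_uIcc)).1
        ((intervalIntegrable_beta_integrand ha hbs).mono_set
          (uIcc_subset_uIcc_left (by rwa [uIcc_of_le zero_le_one]))))
      ((intervalIntegrable_congr (hright.mono uIoc_subset_uIcc)).1
        ((intervalIntegrable_beta_integrand has hb).mono_set
          (uIcc_subset_uIcc_right (by rwa [uIcc_of_le zero_le_one])))),
    ← intervalIntegral.integral_congr hleft, ← intervalIntegral.integral_congr hright,
    ← betaFn_mul_regIncBeta ha hbs, integral_beta_integrand_to_one has hb hhalf]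
  ring

lemma image_mul_div_one_sub_Ioo {t : ℝ} (ht : 0 < t) :
    (fun v => t * v / (1 - v)) '' Ioo 0 1 = Ioi 0 := by
  refine Subset.antisymm (image_subset_iff.2 fun v hv => ?_) fun x hx => ?_
  · exact div_pos (mul_pos ht hv.1) (sub_pos.2 hv.2)
  · have hx : 0 < x := hx
    refine ⟨x / (x + t), ⟨by positivity, (div_lt_one (by positivity)).2 (by linarith)⟩, ?_⟩
    field_simp [ht.ne']
    ring

lemma lintegral_Ioi_eq_lintegral_Ioo_mul_div_one_sub {t : ℝ} (ht : 0 < t) (g : ℝ → ℝ≥0∞) :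
    ∫⁻ x in Ioi 0, g x =
      ∫⁻ v in Ioo 0 1, ENNReal.ofReal (t / (1 - v) ^ 2) * g (t * v / (1 - v)) := by
  have hderiv : ∀ v ∈ Ioo (0 : ℝ) 1,
      HasDerivWithinAt (fun v => t * v / (1 - v)) (t / (1 - v) ^ 2) (Ioo 0 1) v := by
    intro v hv
    have hv' : 1 - v ≠ 0 := (sub_pos.2 hv.2).ne'
    have h : HasDerivAt (fun v => t * v / (1 - v))
        ((t * 1 * (1 - v) - t * v * (0 - 1)) / (1 - v) ^ 2) v :=
      ((hasDerivAt_id' v).const_mul t).div ((hasDerivAt_const v 1).sub (hasDerivAt_id' v)) hv'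
    exact (h.congr_deriv (by ring)).hasDerivWithinAt
  have hinj : InjOn (fun v => t * v / (1 - v)) (Ioo 0 1) := by
    intro v hv w hw h
    have := sub_pos.2 hv.2
    have := sub_pos.2 hw.2
    field_simp at h
    nlinarith
  rw [← image_mul_div_one_sub_Ioo ht,
    lintegral_image_eq_lintegral_abs_deriv_mul measurableSet_Ioo hderiv hinj]
  refine setLIntegral_congr_fun measurableSet_Ioo fun v hv => ?_
  rw [abs_of_nonneg (by positivity)]

lemma lintegral_rpow_mul_exp_neg_mul_Ioi {a r : ℝ} (ha : 0 < a) (hr : 0 < r) :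
    ∫⁻ t in Ioi 0, ENNReal.ofReal (t ^ (a - 1) * exp (-(r * t))) =
      ENNReal.ofReal ((1 / r) ^ a * Gamma a) := by
  have hval := integral_rpow_mul_exp_neg_mul_Ioi ha hr
  have hint : IntegrableOn (fun t : ℝ => t ^ (a - 1) * exp (-(r * t))) (Ioi 0) :=
    Integrable.of_integral_ne_zero (by rw [hval]; positivity)
  rw [← hval, ofReal_integral_eq_lintegral_ofReal hint
    (ae_restrict_of_forall_mem measurableSet_Ioi fun t (ht : 0 < t) => by positivity)]

lemma lintegral_gammaPDF_mul_gammaPDF_eq_betaPDF {a₁ a₂ l v : ℝ} (ha₁ : 0 < a₁) (ha₂ : 0 < a₂)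
    (hl : 0 < l) (hv : v ∈ Ioo 0 1) :
    ∫⁻ t in Ioi 0, gammaPDF a₂ l t *
        (ENNReal.ofReal (t / (1 - v) ^ 2) * gammaPDF a₁ l (t * v / (1 - v))) =
      betaPDF a₁ a₂ v := by
  obtain ⟨hv0, hv1⟩ := hv
  have hw : 0 < 1 - v := sub_pos.2 hv1
  set K := l ^ (a₁ + a₂) / (Gamma a₁ * Gamma a₂) * v ^ (a₁ - 1) / ((1 - v) ^ (a₁ - 1) * (1 - v) ^ 2)
  have hK : 0 ≤ K := by positivity
  have hpt : ∀ t ∈ Ioi (0 : ℝ), gammaPDF a₂ l t *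
      (ENNReal.ofReal (t / (1 - v) ^ 2) * gammaPDF a₁ l (t * v / (1 - v))) =
        ENNReal.ofReal K * ENNReal.ofReal (t ^ (a₁ + a₂ - 1) * exp (-(l / (1 - v) * t))) := by
    intro t (ht : 0 < t)
    rw [gammaPDF_of_nonneg ht.le, gammaPDF_of_nonneg (by positivity), ← ENNReal.ofReal_mul hK,
      ← ENNReal.ofReal_mul (by positivity), ← ENNReal.ofReal_mul (by positivity)]
    congr 1
    simp only [K]
    rw [div_rpow (by positivity) hw.le, mul_rpow ht.le hv0.le,
      show t ^ (a₁ + a₂ - 1) = t ^ (a₂ - 1) * t * t ^ (a₁ - 1) by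
        rw [mul_comm _ t, ← rpow_one_add' ht.le (by linarith), ← rpow_add ht]; ring_nf,
      rpow_add hl,
      show -(l / (1 - v) * t) = -(l * t) + -(l * (t * v / (1 - v))) by field_simp; ring,
      exp_add]
    field_simp
  rw [setLIntegral_congr_fun measurableSet_Ioi hpt, lintegral_const_mul' _ _ ENNReal.ofReal_ne_top,
    lintegral_rpow_mul_exp_neg_mul_Ioi (add_pos ha₁ ha₂) (div_pos hl hw),
    ← ENNReal.ofReal_mul hK, betaPDF_of_pos_lt_one hv0 hv1]
  congr 1
  simp only [K]
  rw [one_div_div, div_rpow hw.le hl.le,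
    show (1 - v) ^ (a₁ + a₂) = (1 - v) ^ (a₁ - 1) * (1 - v) ^ (a₂ - 1) * (1 - v) ^ (2 : ℝ) by
      rw [← rpow_add hw, ← rpow_add hw]; ring_nf,
    rpow_two, ProbabilityTheory.beta]
  field_simp

lemma lintegral_comp_div_add_gammaMeasure_prod {a₁ a₂ l : ℝ} (ha₁ : 0 < a₁) (ha₂ : 0 < a₂)
    (hl : 0 < l) {g : ℝ → ℝ≥0∞} (hg : Measurable g) :
    ∫⁻ q, g (q.1 / (q.1 + q.2)) ∂(gammaMeasure a₁ l).prod (gammaMeasure a₂ l) =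
      ∫⁻ v, g v ∂betaMeasure a₁ a₂ := by
  have := isProbabilityMeasure_gammaMeasure ha₁ hl
  have := isProbabilityMeasure_gammaMeasure ha₂ hl
  have hratio : Measurable fun q : ℝ × ℝ => g (q.1 / (q.1 + q.2)) := by fun_prop
  have hinner : ∀ t ∈ Ioi (0 : ℝ), ∫⁻ x, g (x / (x + t)) ∂gammaMeasure a₁ l =
      ∫⁻ v in Ioo 0 1,
        ENNReal.ofReal (t / (1 - v) ^ 2) * gammaPDF a₁ l (t * v / (1 - v)) * g v := by
    intro t (ht : 0 < t)
    rw [lintegral_gammaMeasure (by fun_prop), lintegral_Ioi_eq_lintegral_Ioo_mul_div_one_sub ht]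
    refine setLIntegral_congr_fun measurableSet_Ioo fun v hv => ?_
    have hw : 1 - v ≠ 0 := (sub_pos.2 hv.2).ne'
    rw [show t * v / (1 - v) / (t * v / (1 - v) + t) = v by field_simp; ring, mul_assoc]
  calc ∫⁻ q, g (q.1 / (q.1 + q.2)) ∂(gammaMeasure a₁ l).prod (gammaMeasure a₂ l)
      = ∫⁻ t in Ioi 0, gammaPDF a₂ l t * ∫⁻ x, g (x / (x + t)) ∂gammaMeasure a₁ l := by
        rw [lintegral_prod_symm' _ hratio, lintegral_gammaMeasure hratio.lintegral_prod_left']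
    _ = ∫⁻ t in Ioi 0, ∫⁻ v in Ioo 0 1, gammaPDF a₂ l t *
          (ENNReal.ofReal (t / (1 - v) ^ 2) * gammaPDF a₁ l (t * v / (1 - v))) * g v := by
        refine setLIntegral_congr_fun measurableSet_Ioi fun t ht => ?_
        rw [hinner t ht, ← lintegral_const_mul _ (by fun_prop)]
        simp only [mul_assoc]
    _ = ∫⁻ v in Ioo 0 1, ∫⁻ t in Ioi 0, gammaPDF a₂ l t *
          (ENNReal.ofReal (t / (1 - v) ^ 2) * gammaPDF a₁ l (t * v / (1 - v))) * g v :=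
        lintegral_lintegral_swap (by fun_prop)
    _ = ∫⁻ v, g v ∂betaMeasure a₁ a₂ := by
        rw [lintegral_betaMeasure hg]
        refine setLIntegral_congr_fun measurableSet_Ioo fun v hv => ?_
        rw [lintegral_mul_const _ (by fun_prop),
          lintegral_gammaPDF_mul_gammaPDF_eq_betaPDF ha₁ ha₂ hl hv]

lemma map_div_add_gammaMeasure_prod {a₁ a₂ l : ℝ} (ha₁ : 0 < a₁) (ha₂ : 0 < a₂) (hl : 0 < l) :
    ((gammaMeasure a₁ l).prod (gammaMeasure a₂ l)).map (fun q => q.1 / (q.1 + q.2)) =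
      betaMeasure a₁ a₂ := by
  have hratio : Measurable fun q : ℝ × ℝ => q.1 / (q.1 + q.2) := by fun_prop
  ext s hs
  rw [Measure.map_apply hratio hs, ← lintegral_indicator_one hs,
    ← lintegral_comp_div_add_gammaMeasure_prod ha₁ ha₂ hl (measurable_one.indicator hs),
    ← lintegral_indicator_one (hratio hs)]
  rfl

lemma ProbabilityTheory.IndepFun.map_div_add_eq_betaMeasure {Ω : Type*} [MeasurableSpace Ω]
    {P : Measure Ω} [IsFiniteMeasure P]
    {X Y : Ω → ℝ} (hindep : IndepFun X Y P) (hX : Measurable X) (hY : Measurable Y)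
    {a₁ a₂ l : ℝ} (ha₁ : 0 < a₁) (ha₂ : 0 < a₂) (hl : 0 < l)
    (hXlaw : P.map X = gammaMeasure a₁ l) (hYlaw : P.map Y = gammaMeasure a₂ l) :
    P.map (fun ω => X ω / (X ω + Y ω)) = betaMeasure a₁ a₂ := by
  rw [← map_div_add_gammaMeasure_prod ha₁ ha₂ hl, ← hXlaw, ← hYlaw,
    ← (indepFun_iff_map_prod_eq_prod_map_map hX.aemeasurable hY.aemeasurable).1 hindep,
    Measure.map_map (by fun_prop) (hX.prodMk hY)]
  rfl

lemma intervalIntegral_mul_measureReal_le_eq_integral {α : Type*} [MeasurableSpace α]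
    (μ : Measure α) [IsFiniteMeasure μ] {Z : α → ℝ} (hZ : Measurable Z) {a b : ℝ} (hab : a ≤ b)
    (hZab : ∀ᵐ x ∂μ, Z x ∈ Icc a b) {f : ℝ → ℝ} (hf : IntervalIntegrable f volume a b) :
    ∫ y in a..b, f y * μ.real {x | y ≤ Z x} = ∫ x, (∫ y in a..Z x, f y) ∂μ := by
  set U : Set (ℝ × α) := {q | q.1 ≤ Z q.2}
  have hU : MeasurableSet U := measurableSet_le measurable_fst (hZ.comp measurable_snd)
  have hF : Integrable (U.indicator fun q => f q.1) ((volume.restrict (Ioc a b)).prod μ) :=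
    ((hf.1.comp_fst μ).indicator hU)
  have hslice : ∀ y x, U.indicator (fun q => f q.1) (y, x) = (Iic (Z x)).indicator f y :=
    fun _ _ => rfl
  rw [intervalIntegral.integral_of_le hab]
  calc ∫ y in Ioc a b, f y * μ.real {x | y ≤ Z x}
      = ∫ y in Ioc a b, ∫ x, U.indicator (fun q => f q.1) (y, x) ∂μ := by
        refine integral_congr_ae (ae_of_all _ fun y => ?_)
        dsimp only
        rw [mul_comm, ← smul_eq_mul,
          ← integral_indicator_const _ (measurableSet_le measurable_const hZ)]
        rfl
    _ = ∫ x, (∫ y in Ioc a b, U.indicator (fun q => f q.1) (y, x)) ∂μ :=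
        integral_integral_swap (f := fun y x => U.indicator (fun q => f q.1) (y, x)) hF
    _ = ∫ x, (∫ y in a..Z x, f y) ∂μ := by
        refine integral_congr_ae ?_
        filter_upwards [hZab] with x hx
        simp only [hslice]
        rw [setIntegral_indicator measurableSet_Iic, Ioc_inter_Iic, min_eq_right hx.2,
          intervalIntegral.integral_of_le hx.1]

lemma compl_setOf_one_sub_lt_and_lt (y : ℝ) :
    {v : ℝ | 1 - y < v ∧ v < y}ᶜ = {v | y ≤ max v (1 - v)} := by
  ext v
  simp only [mem_compl_iff, mem_ofPred_eq, not_and_or, not_lt, le_max_iff]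
  rw [le_sub_comm, or_comm]

lemma one_sub_measureReal_one_sub_lt_and_lt {Ω : Type*} [MeasurableSpace Ω] {P : Measure Ω}
    [IsProbabilityMeasure P] {V : Ω → ℝ} (hV : Measurable V) (y : ℝ) :
    1 - (P {ω | 1 - y < V ω ∧ V ω < y}).toReal = (P.map V).real {v | y ≤ max v (1 - v)} := by
  have hS : MeasurableSet {v : ℝ | 1 - y < v ∧ v < y} := by measurability
  have := Measure.isProbabilityMeasure_map (μ := P) hV.aemeasurable
  rw [← compl_setOf_one_sub_lt_and_lt, probReal_compl_eq_one_sub hS, map_measureReal_apply hV hS]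
  rfl

/-- For independent `X ~ Gamma(α₁, λ)`, `Y ~ Gamma(α₂, λ)` with common rate and
`p > max{−1, −1−α₁, −1−α₂}`:
`∫_{1/2}^1 y^p (1 − P(1−y < X/(X+Y) < y)) dy` has the stated closed form. -/
theorem xi_closed_form {Ω : Type*} [MeasurableSpace Ω]
    (P : Measure Ω) [IsProbabilityMeasure P] (X Y : Ω → ℝ)
    (hX : Measurable X) (hY : Measurable Y)
    (α₁ α₂ l p : ℝ) (hα₁ : 0 < α₁) (hα₂ : 0 < α₂) (hl : 0 < l)
    (hp : max (max (-1) (-1 - α₁)) (-1 - α₂) < p)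
    (hXlaw : Measure.map X P = gammaMeasure α₁ l)
    (hYlaw : Measure.map Y P = gammaMeasure α₂ l)
    (hindep : IndepFun X Y P) :
    ∫ y in Ioo (1/2 : ℝ) 1,
        y ^ p * (1 - (P {ω | 1 - y < X ω / (X ω + Y ω) ∧ X ω / (X ω + Y ω) < y}).toReal)
      = (1 / (p + 1)) *
        (betaFn (α₁ + p + 1) α₂ / betaFn α₁ α₂ * (1 - regIncBeta (1/2) (α₁ + p + 1) α₂) +
          betaFn α₁ (α₂ + p + 1) / betaFn α₁ α₂ * regIncBeta (1/2) α₁ (α₂ + p + 1) -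
          (1/2 : ℝ) ^ (p + 1)) := by
  have hp1 : -1 < p := lt_of_le_of_lt ((le_max_left _ _).trans (le_max_left _ _)) hp
  have hV := hindep.map_div_add_eq_betaMeasure hX hY hα₁ hα₂ hl hXlaw hYlaw
  have := isProbabilityMeasureBeta hα₁ hα₂
  calc _ = ∫ y in (1/2 : ℝ)..1, y ^ p * (betaMeasure α₁ α₂).real {v | y ≤ max v (1 - v)} := by
        rw [intervalIntegral.integral_of_le (by norm_num), integral_Ioc_eq_integral_Ioo, ← hV]
        refine setIntegral_congr_fun measurableSet_Ioo fun y _ => ?_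
        rw [one_sub_measureReal_one_sub_lt_and_lt (V := fun ω => X ω / (X ω + Y ω)) (by fun_prop)]
    _ = ∫ v, (∫ y in (1/2 : ℝ)..max v (1 - v), y ^ p) ∂betaMeasure α₁ α₂ :=
        intervalIntegral_mul_measureReal_le_eq_integral _ (by fun_prop) (by norm_num)
          (ae_max_one_sub_mem_Icc_betaMeasure α₁ α₂) (intervalIntegral.intervalIntegrable_rpow' hp1)
    _ = ∫ v, (max v (1 - v) ^ (p + 1) - (1 / 2) ^ (p + 1)) / (p + 1) ∂betaMeasure α₁ α₂ :=
        integral_congr_ae (ae_of_all _ fun v => integral_rpow (Or.inl hp1))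
    _ = _ := by
        rw [integral_div, integral_sub (integrable_max_one_sub_rpow_betaMeasure hα₁ hα₂
            (by linarith)) (integrable_const _), integral_const, probReal_univ, one_smul,
          integral_max_one_sub_rpow_betaMeasure hα₁ hα₂ (by linarith) (by linarith),
          ← add_assoc α₁, ← add_assoc α₂]
        ring
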